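/- arXiv:2506.16487 — 4 statements merged into one kernel-verified Lean document; each statement's English description precedes it below -/
import Mathlib

section
/- Let V = ⊕_{i,j ∈ ℕ₊} ℂ·(e_i ⊗ e_j) be the vector space with basis indexed by ℕ₊ × ℕ₊ (finitely supported families), and W = ⊕_{k ∈ ℕ₊} ℂ·e_k. Define linear maps φ, ν̃ : V → W by φ(e_i ⊗ e_j) = e_i and ν̃(e_i ⊗ e_j) = e_{ν(i,j)}, where ν is the antidiagonal pairing bijection. Then for every t ∈ ℂ with t ≠ 1, the linear map t·φ + (1−t)·ν̃ is injective. -/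
open scoped TensorProduct

noncomputable section

/-- The antidiagonal pairing bijection ν(i,j) = (i+j-1)(i+j-2)/2 + j on ℕ₊. -/
def nu (p : ℕ+ × ℕ+) : ℕ+ :=
  ⟨((p.1 : ℕ) + (p.2 : ℕ) - 1) * ((p.1 : ℕ) + (p.2 : ℕ) - 2) / 2 + (p.2 : ℕ),
    Nat.lt_of_lt_of_le p.2.2 (Nat.le_add_left _ _)⟩

/-- Standard basis vector e_i of ⊕_{ℕ₊} ℂ. -/
def e (i : ℕ+) : ℕ+ →₀ ℂ := Finsupp.single i 1

/-- The linear map φ with φ(e_i ⊗ e_j) = e_i. -/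
def phiT : ((ℕ+ →₀ ℂ) ⊗[ℂ] (ℕ+ →₀ ℂ)) →ₗ[ℂ] (ℕ+ →₀ ℂ) :=
  Finsupp.lmapDomain ℂ ℂ Prod.fst ∘ₗ (finsuppTensorFinsupp' ℂ ℕ+ ℕ+).toLinearMap

/-- The linear map ν̃ with ν̃(e_i ⊗ e_j) = e_{ν(i,j)}. -/
def nuT : ((ℕ+ →₀ ℂ) ⊗[ℂ] (ℕ+ →₀ ℂ)) →ₗ[ℂ] (ℕ+ →₀ ℂ) :=
  Finsupp.lmapDomain ℂ ℂ (fun p => nu p) ∘ₗ (finsuppTensorFinsupp' ℂ ℕ+ ℕ+).toLinearMap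

/-- The linear map f̂ with f̂(e_i) = f(e_i) ⊗ e_i. -/
def fhat (f : (ℕ+ →₀ ℂ) →ₗ[ℂ] (ℕ+ →₀ ℂ)) :
    (ℕ+ →₀ ℂ) →ₗ[ℂ] ((ℕ+ →₀ ℂ) ⊗[ℂ] (ℕ+ →₀ ℂ)) :=
  Finsupp.lsum ℂ fun i => LinearMap.toSpanSingleton ℂ _ (f (e i) ⊗ₜ[ℂ] e i)

/-- β(f) = ν̃ ∘ f̂, i.e. β(f)(e_i) = Σ_k f_{ki} e_{ν(k,i)}. -/
def beta (f : (ℕ+ →₀ ℂ) →ₗ[ℂ] (ℕ+ →₀ ℂ)) : (ℕ+ →₀ ℂ) →ₗ[ℂ] (ℕ+ →₀ ℂ) :=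
  nuT ∘ₗ fhat f

/-- Triangular numbers. -/
private def Tn (n : ℕ) : ℕ := n * (n + 1) / 2

private lemma Tn_succ (n : ℕ) : Tn (n + 1) = Tn n + (n + 1) := by
  have h : (n + 1) * (n + 2) = n * (n + 1) + (n + 1) * 2 := by ring
  unfold Tn
  rw [show n + 1 + 1 = n + 2 from rfl, h, Nat.add_mul_div_right _ _ (by norm_num)]

private lemma Tn_mono : Monotone Tn := fun a b h =>
  Nat.div_le_div_right (Nat.mul_le_mul h (by omega))

private lemma Tn_ge (n : ℕ) : n ≤ Tn n := by
  induction n with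
  | zero => simp [Tn]
  | succ k ih => rw [Tn_succ]; omega

private lemma nu_nat (p : ℕ+ × ℕ+) :
    (nu p : ℕ) = Tn ((p.1 : ℕ) + (p.2 : ℕ) - 2) + (p.2 : ℕ) := by
  have h1 : 1 ≤ (p.1 : ℕ) := p.1.one_le
  have h2 : 1 ≤ (p.2 : ℕ) := p.2.one_le
  have h : (p.1 : ℕ) + (p.2 : ℕ) - 1 = ((p.1 : ℕ) + (p.2 : ℕ) - 2) + 1 := by omega
  show ((p.1 : ℕ) + (p.2 : ℕ) - 1) * ((p.1 : ℕ) + (p.2 : ℕ) - 2) / 2 + (p.2 : ℕ) = _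
  rw [h, Tn, Nat.mul_comm]

private lemma nu_inj : Function.Injective nu := by
  intro p q h
  have hn : (nu p : ℕ) = (nu q : ℕ) := by rw [h]
  rw [nu_nat, nu_nat] at hn
  have hp1 : 1 ≤ (p.1 : ℕ) := p.1.one_le
  have hp2 : 1 ≤ (p.2 : ℕ) := p.2.one_le
  have hq1 : 1 ≤ (q.1 : ℕ) := q.1.one_le
  have hq2 : 1 ≤ (q.2 : ℕ) := q.2.one_le
  set a := (p.1 : ℕ) + (p.2 : ℕ) - 2 with ha
  set b := (q.1 : ℕ) + (q.2 : ℕ) - 2 with hb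
  have hab : a = b := by
    rcases lt_trichotomy a b with hlt | heq | hgt
    · have key : Tn (a + 1) ≤ Tn b := Tn_mono (by omega)
      rw [Tn_succ] at key
      omega
    · exact heq
    · have key : Tn (b + 1) ≤ Tn a := Tn_mono (by omega)
      rw [Tn_succ] at key
      omega
  rw [hab] at hn
  have h2 : (p.2 : ℕ) = (q.2 : ℕ) := by omega
  have h1 : (p.1 : ℕ) = (q.1 : ℕ) := by omega
  exact Prod.ext (PNat.coe_injective h1) (PNat.coe_injective h2)

private lemma nu_ge (p : ℕ+ × ℕ+) : p.1 ≤ nu p := by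
  have hp1 : 1 ≤ (p.1 : ℕ) := p.1.one_le
  have hp2 : 1 ≤ (p.2 : ℕ) := p.2.one_le
  have hT := Tn_ge ((p.1 : ℕ) + (p.2 : ℕ) - 2)
  rw [← PNat.coe_le_coe, nu_nat]
  omega

/-- for t ≠ 1, the map t·φ + (1−t)·ν̃ is injective, where
φ(e_i ⊗ e_j) = e_i and ν̃(e_i ⊗ e_j) = e_{ν(i,j)}. -/
theorem injective_t_phi_add_nu
    (φ ν' : ((ℕ+ →₀ ℂ) ⊗[ℂ] (ℕ+ →₀ ℂ)) →ₗ[ℂ] (ℕ+ →₀ ℂ))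
    (hφ : ∀ i j : ℕ+, φ (e i ⊗ₜ[ℂ] e j) = e i)
    (hν : ∀ i j : ℕ+, ν' (e i ⊗ₜ[ℂ] e j) = e (nu (i, j)))
    (t : ℂ) (ht : t ≠ 1) :
    Function.Injective ⇑(t • φ + (1 - t) • ν') := by
  set F := t • φ + (1 - t) • ν' with hF
  have hsingle : ∀ (p : ℕ+ × ℕ+) (a : ℂ),
      F ((finsuppTensorFinsupp' ℂ ℕ+ ℕ+).symm (Finsupp.single p a)) =
        a • (t • e p.1 + (1 - t) • e (nu p)) := by
    intro p a
    rw [finsuppTensorFinsupp'_symm_single_eq_tmul_single_one]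
    have hps : Finsupp.single p.1 a = a • e p.1 := by
      rw [e, Finsupp.smul_single, smul_eq_mul, mul_one]
    rw [hps, show (Finsupp.single p.2 1 : ℕ+ →₀ ℂ) = e p.2 from rfl,
      ← TensorProduct.smul_tmul', map_smul]
    congr 1
    simp only [hF, LinearMap.add_apply, LinearMap.smul_apply, hφ p.1 p.2, hν p.1 p.2]
  intro x y hxy
  have hzF : F (x - y) = 0 := by rw [map_sub, hxy, sub_self]
  rw [← sub_eq_zero]
  set z := x - y with hzdef
  set c := finsuppTensorFinsupp' ℂ ℕ+ ℕ+ z with hc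
  have hzc : z = (finsuppTensorFinsupp' ℂ ℕ+ ℕ+).symm c :=
    ((finsuppTensorFinsupp' ℂ ℕ+ ℕ+).symm_apply_apply z).symm
  suffices hc0 : c = 0 by
    have h0 : (finsuppTensorFinsupp' ℂ ℕ+ ℕ+) z = 0 := by rw [← hc]; exact hc0
    exact (LinearEquiv.map_eq_zero_iff _).mp h0
  by_contra hcne
  have hz : F z = 0 := hzF
  -- rewrite F z as a finsupp sum
  have hzc : z = (finsuppTensorFinsupp' ℂ ℕ+ ℕ+).symm c :=
    ((finsuppTensorFinsupp' ℂ ℕ+ ℕ+).symm_apply_apply z).symm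
  have hFz : F z = c.sum fun p a => a • (t • e p.1 + (1 - t) • e (nu p)) := by
    have hG : F z = (F ∘ₗ (finsuppTensorFinsupp' ℂ ℕ+ ℕ+).symm.toLinearMap)
        (c.sum fun p a => Finsupp.single p a) := by
      rw [Finsupp.sum_single]
      simp only [LinearMap.comp_apply, LinearEquiv.coe_toLinearMap]
      rw [← hzc]
    rw [hG, map_finsuppSum]
    exact Finsupp.sum_congr fun p _ => hsingle p (c p)
  have hS : c.support.Nonempty := Finsupp.support_nonempty_iff.mpr hcne
  have hSi : (c.support.image nu).Nonempty := hS.image nu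
  set K := (c.support.image nu).max' hSi with hK
  obtain ⟨p₀, hp₀S, hp₀K⟩ := Finset.mem_image.mp (Finset.max'_mem _ hSi)
  have hKmax : ∀ p ∈ c.support, nu p ≤ K := fun p hp =>
    Finset.le_max' _ _ (Finset.mem_image_of_mem nu hp)
  have h0 : (c.sum fun p a => a • (t • e p.1 + (1 - t) • e (nu p))) K = 0 := by
    rw [← hFz, hz]; simp
  rw [Finsupp.sum_apply] at h0
  have h0' : ∑ p ∈ c.support,
      c p * ((t • e p.1 + (1 - t) • e (nu p)) K) = 0 := by
    rw [← h0]
    exact Finset.sum_congr rfl fun p _ => by simp [mul_add]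
  rw [Finset.sum_eq_single_of_mem p₀ hp₀S (fun p hp hne => by
    have hν1 : nu p ≠ K := fun h => hne (nu_inj (h.trans hp₀K.symm))
    have h1 : p.1 ≠ K := by
      intro h
      exact hν1 (le_antisymm (hKmax p hp) (h ▸ nu_ge p))
    simp [e, Finsupp.single_apply, h1, hν1])] at h0'
  have hcp₀ : c p₀ ≠ 0 := Finsupp.mem_support_iff.mp hp₀S
  have hfac : ((t • e p₀.1 + (1 - t) • e (nu p₀)) K) = 0 :=
    (mul_eq_zero.mp h0').resolve_left hcp₀
  by_cases hcase : p₀.1 = K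
  · simp [e, Finsupp.single_apply, hcase, hp₀K, ← hK] at hfac
  · simp [e, Finsupp.single_apply, hcase, hp₀K, ← hK] at hfac
    exact ht (by linear_combination -hfac)
end
end

section
/- Let f : ⊕_{n ∈ ℕ₊} ℂ → ⊕_{m ∈ ℕ₊} ℂ be a linear map with f(e_i) ≠ 0 for all i, and let β(f) = ν̃ ∘ f̂ as above. Then for every t ∈ [0,1], the linear map t·f + (1−t)·β(f) also satisfies (t·f + (1−t)·β(f))(e_i) ≠ 0 for all i. -/
open scoped TensorProduct

noncomputable section

/-! ### Auxiliary lemmas -/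

lemma T_lt (n : ℕ) : n * (n + 1) / 2 < (n + 1) * (n + 1 + 1) / 2 :=
  Nat.div_lt_div_of_lt_of_dvd (Nat.even_mul_succ_self (n + 1)).two_dvd (by nlinarith)

lemma T_mono : StrictMono (fun n : ℕ => n * (n + 1) / 2) :=
  strictMono_nat_of_lt_succ fun n => T_lt n

lemma nu_eq (k i : ℕ+) :
    (nu (k, i) : ℕ) = ((k : ℕ) + (i : ℕ) - 2) * (((k : ℕ) + (i : ℕ) - 2) + 1) / 2 + (i : ℕ) := by
  have hk := k.pos; have hi := i.pos
  show ((k : ℕ) + (i : ℕ) - 1) * ((k : ℕ) + (i : ℕ) - 2) / 2 + (i : ℕ) = _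
  have h1 : (k : ℕ) + (i : ℕ) - 1 = ((k : ℕ) + (i : ℕ) - 2) + 1 := by omega
  rw [h1, mul_comm]

lemma nu_strictMono (i : ℕ+) : StrictMono (fun k : ℕ+ => nu (k, i)) := by
  intro a b hab
  have h : (nu (a, i) : ℕ) < (nu (b, i) : ℕ) := by
    rw [nu_eq, nu_eq]
    have hab' : (a : ℕ) + (i : ℕ) - 2 < (b : ℕ) + (i : ℕ) - 2 := by
      have h2 := a.pos; have h3 := i.pos
      have h4 : (a : ℕ) < (b : ℕ) := hab
      omega
    exact Nat.add_lt_add_right (T_mono hab') (i : ℕ)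
  exact h

lemma nu_ge_s5 (k i : ℕ+) : k ≤ nu (k, i) := by
  have hk := k.pos; have hi := i.pos
  rw [← PNat.coe_le_coe, nu_eq]
  set n : ℕ := (k : ℕ) + (i : ℕ) - 2 with hn
  have h2 : n * 2 ≤ n * (n + 1) := by
    rcases Nat.eq_zero_or_pos n with h | h
    · simp [h]
    · exact Nat.mul_le_mul_left n (by omega)
  have h : n ≤ n * (n + 1) / 2 :=
    Nat.le_div_iff_mul_le (by norm_num) |>.mpr h2
  obtain ⟨m, hm, hmn⟩ : ∃ m, n * (n + 1) / 2 = m ∧ n ≤ m := ⟨_, rfl, h⟩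
  rw [hm]
  omega

lemma fhat_e (f : (ℕ+ →₀ ℂ) →ₗ[ℂ] (ℕ+ →₀ ℂ)) (i : ℕ+) :
    fhat f (e i) = f (e i) ⊗ₜ[ℂ] e i := by
  simp [fhat, e]

lemma nuT_tmul (g : ℕ+ →₀ ℂ) (i : ℕ+) :
    nuT (g ⊗ₜ[ℂ] e i) = Finsupp.mapDomain (fun k => nu (k, i)) g := by
  induction g using Finsupp.induction_linear with
  | zero => simp
  | add a b ha hb => simp [TensorProduct.add_tmul, ha, hb, Finsupp.mapDomain_add]
  | single k c =>
    simp [nuT, e, finsuppTensorFinsupp'_single_tmul_single, Finsupp.mapDomain_single]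

lemma beta_e (f : (ℕ+ →₀ ℂ) →ₗ[ℂ] (ℕ+ →₀ ℂ)) (i : ℕ+) :
    beta f (e i) = Finsupp.mapDomain (fun k => nu (k, i)) (f (e i)) := by
  rw [beta, LinearMap.comp_apply, fhat_e, nuT_tmul]

/-- if f(e_i) ≠ 0 for all i, then for all t ∈ [0,1], the map
t·f + (1−t)·β(f) also has nonzero columns. -/
theorem columns_nonzero_of_homotopy (f : (ℕ+ →₀ ℂ) →ₗ[ℂ] (ℕ+ →₀ ℂ))
    (hf : ∀ i : ℕ+, f (e i) ≠ 0) (t : ℝ) (ht : t ∈ Set.Icc (0 : ℝ) 1) (i : ℕ+) :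
    ((t : ℂ) • f + (1 - (t : ℂ)) • beta f) (e i) ≠ 0 := by
  set g : ℕ+ →₀ ℂ := f (e i) with hg
  have hg0 : g ≠ 0 := hf i
  have hX : ((t : ℂ) • f + (1 - (t : ℂ)) • beta f) (e i)
      = (t : ℂ) • g + (1 - (t : ℂ)) • Finsupp.mapDomain (fun k => nu (k, i)) g := by
    simp [beta_e, hg]
  rw [hX]
  by_cases h1 : (1 - (t : ℂ)) = 0
  · have ht1 : (t : ℂ) = 1 := (sub_eq_zero.mp h1).symm
    rw [h1, ht1]
    simpa using hg0
  · -- pick the maximal element of the support of g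
    have hS : g.support.Nonempty := Finsupp.support_nonempty_iff.mpr hg0
    set K : ℕ+ := g.support.max' hS with hK
    have hKmem : K ∈ g.support := g.support.max'_mem hS
    have hgK : g K ≠ 0 := Finsupp.mem_support_iff.mp hKmem
    set M : ℕ+ := nu (K, i) with hM
    have hmapM : (Finsupp.mapDomain (fun k => nu (k, i)) g) M = g K := by
      rw [hM]
      exact Finsupp.mapDomain_apply (nu_strictMono i).injective g K
    intro hzero
    have hcoef : (t : ℂ) * g M + (1 - (t : ℂ)) * g K = 0 := by
      have := congrArg (fun v : ℕ+ →₀ ℂ => v M) hzero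
      simpa [Finsupp.add_apply, Finsupp.smul_apply, smul_eq_mul, hmapM] using this
    by_cases hKM : M = K
    · rw [hKM] at hcoef
      have : ((t : ℂ) + (1 - (t : ℂ))) * g K = 0 := by ring_nf; ring_nf at hcoef; linear_combination hcoef
      simp at this
      exact hgK this
    · have hKltM : K < M := lt_of_le_of_ne (nu_ge_s5 K i) (Ne.symm hKM)
      have hgM : g M = 0 := by
        by_contra hgM
        have : M ∈ g.support := Finsupp.mem_support_iff.mpr hgM
        exact absurd (g.support.le_max' M this) (not_le.mpr hKltM)
      rw [hgM, mul_zero, zero_add] at hcoef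
      rcases mul_eq_zero.mp hcoef with h | h
      · exact h1 h
      · exact hgK h
end
end

section
/- Suppose v = Σ a_{ij} e_i ⊗ e_j is a finitely supported family of complex numbers satisfying: a_{11} = −t Σ_{j≥2} a_{1j}, a_{21} = −t Σ_{j≥2} a_{2j}, and a_{ij} = (t/(t−1)) Σ_{ℓ≥1} a_{ν(i,j),ℓ} for all other (i,j), where t ≠ 1 and ν is the antidiagonal pairing bijection. Then v = 0. -/
open scoped TensorProduct

noncomputable section

lemma nu_gt (p : ℕ+ × ℕ+) (h1 : p ≠ (1, 1)) (h2 : p ≠ (2, 1)) :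
    (p.1 : ℕ) < (nu p : ℕ) ∧ 3 ≤ (nu p : ℕ) := by
  obtain ⟨⟨i, hi⟩, ⟨j, hj⟩⟩ := p
  have hne1 : ¬(i = 1 ∧ j = 1) := by
    rintro ⟨rfl, rfl⟩; exact h1 rfl
  have hne2 : ¬(i = 2 ∧ j = 1) := by
    rintro ⟨rfl, rfl⟩; exact h2 rfl
  show i < (i + j - 1) * (i + j - 2) / 2 + j ∧ 3 ≤ (i + j - 1) * (i + j - 2) / 2 + j
  obtain ⟨m, hm⟩ : ∃ m, i + j = m + 2 := ⟨i + j - 2, by omega⟩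
  have hE : (i + j - 1) * (i + j - 2) = (m + 1) * m := by
    congr 1 <;> omega
  have heven : Even ((i + j - 1) * (i + j - 2)) := by
    rw [hE]; simpa [mul_comm] using Nat.even_mul_succ_self m
  obtain ⟨c, hc⟩ := heven
  have hc2 : (i + j - 1) * (i + j - 2) / 2 = c := by omega
  rw [hc2]
  have hprod : 2 * c = (m + 1) * m := by omega
  have hcm : 2 * m ≤ 2 * c := by nlinarith
  rcases Nat.lt_or_ge j 2 with hjlt | hjge
  · -- j = 1
    have hj1 : j = 1 := by omega
    have hm2 : 2 ≤ m := by omega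
    have h3 : 3 * m ≤ 2 * c := by nlinarith
    omega
  · omega

/-- the explicit linear relations force all coefficients to vanish. -/
theorem coeffs_vanish (t : ℂ) (ht : t ≠ 1) (a : ℕ+ × ℕ+ →₀ ℂ)
    (h11 : a (1, 1) = -t * ∑ᶠ j ∈ Set.Ici (2 : ℕ+), a (1, j))
    (h21 : a (2, 1) = -t * ∑ᶠ j ∈ Set.Ici (2 : ℕ+), a (2, j))
    (hrest : ∀ p : ℕ+ × ℕ+, p ≠ (1, 1) → p ≠ (2, 1) →
      a p = (t / (t - 1)) * ∑ᶠ ℓ : ℕ+, a (nu p, ℓ)) :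
    a = 0 := by
  set M : ℕ := (a.support.sup fun p => (p.1 : ℕ)) + 1 with hM
  have hbound : ∀ p : ℕ+ × ℕ+, M ≤ (p.1 : ℕ) → a p = 0 := by
    intro p hp
    by_contra h
    have := Finset.le_sup (f := fun p : ℕ+ × ℕ+ => (p.1 : ℕ)) (Finsupp.mem_support_iff.2 h)
    omega
  have key : ∀ n : ℕ, ∀ p : ℕ+ × ℕ+, M - (p.1 : ℕ) ≤ n → p ≠ (1, 1) → p ≠ (2, 1) → a p = 0 := by
    intro n
    induction n with
    | zero =>
      intro p hp _ _
      exact hbound p (by omega)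
    | succ n ih =>
      intro p hp h1 h2
      rcases le_or_gt M (p.1 : ℕ) with hge | hlt
      · exact hbound p hge
      · rw [hrest p h1 h2]
        have hz : ∑ᶠ ℓ : ℕ+, a (nu p, ℓ) = 0 := by
          apply finsum_eq_zero_of_forall_eq_zero
          intro ℓ
          obtain ⟨hgt, h3⟩ := nu_gt p h1 h2
          apply ih
          · show M - ((nu p : ℕ+) : ℕ) ≤ n
            omega
          · intro hh
            have h4 : nu p = 1 := congrArg Prod.fst hh
            rw [h4] at h3
            norm_num at h3
          · intro hh
            have h4 : nu p = 2 := congrArg Prod.fst hh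
            rw [h4] at h3
            norm_num at h3
        rw [hz, mul_zero]
  have hall : ∀ p : ℕ+ × ℕ+, p ≠ (1, 1) → p ≠ (2, 1) → a p = 0 := fun p =>
    key (M - (p.1 : ℕ)) p le_rfl
  have ha11 : a (1, 1) = 0 := by
    rw [h11, finsum_mem_of_eqOn_zero, mul_zero]
    intro j hj
    apply hall
    · simp only [ne_eq, Prod.mk.injEq, not_and]
      intro _ h; exact absurd (h ▸ hj) (by norm_num)
    · simp only [ne_eq, Prod.mk.injEq, not_and]
      intro h; exact absurd h (by norm_num)
  have ha21 : a (2, 1) = 0 := by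
    rw [h21, finsum_mem_of_eqOn_zero, mul_zero]
    intro j hj
    apply hall
    · simp only [ne_eq, Prod.mk.injEq, not_and]
      intro h; exact absurd h (by norm_num)
    · simp only [ne_eq, Prod.mk.injEq, not_and]
      intro _ h; exact absurd (h ▸ hj) (by norm_num)
  ext p
  rcases eq_or_ne p (1, 1) with rfl | h1
  · simpa using ha11
  rcases eq_or_ne p (2, 1) with rfl | h2
  · simpa using ha21
  simpa using hall p h1 h2
end
end

section
/- Let (X_n, f_{nn'}) and (Y_n, g_{nn'}) be inverse systems of topological spaces indexed by ℕ, with limits X = lim X_n and Y = lim Y_n. Suppose for each n there are continuous maps u_n : X_n → Y_n and v_n : Y_n → X_n commuting with the structure maps of the systems, together with homotopies u_n ∘ v_n ≃ id_{Y_n} and v_n ∘ u_n ≃ id_{X_n} that are also compatible with the structure maps (i.e. the homotopies commute with f_{nn'} and g_{nn'}). Then the induced continuous maps u : X → Y and v : Y → X are mutually inverse homotopy equivalences. -/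
/-- if two countable inverse systems of spaces are levelwise
homotopy equivalent, with maps and homotopies compatible with the bonding
maps, then the induced maps between the inverse limits are mutually inverse
homotopy equivalences. -/
theorem inverse_limit_homotopy_equiv
    (X Y : ℕ → Type*) [∀ n, TopologicalSpace (X n)] [∀ n, TopologicalSpace (Y n)]
    (f : ∀ ⦃n n' : ℕ⦄, n' ≤ n → C(X n, X n'))
    (g : ∀ ⦃n n' : ℕ⦄, n' ≤ n → C(Y n, Y n'))
    (hf_id : ∀ (n : ℕ) (x : X n), f (le_refl n) x = x)
    (hf_comp : ∀ ⦃n n' n'' : ℕ⦄ (h : n' ≤ n) (h' : n'' ≤ n') (x : X n),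
      f h' (f h x) = f (h'.trans h) x)
    (hg_id : ∀ (n : ℕ) (y : Y n), g (le_refl n) y = y)
    (hg_comp : ∀ ⦃n n' n'' : ℕ⦄ (h : n' ≤ n) (h' : n'' ≤ n') (y : Y n),
      g h' (g h y) = g (h'.trans h) y)
    (u : ∀ n, C(X n, Y n)) (v : ∀ n, C(Y n, X n))
    (hu : ∀ ⦃n n' : ℕ⦄ (h : n' ≤ n) (x : X n), g h (u n x) = u n' (f h x))
    (hv : ∀ ⦃n n' : ℕ⦄ (h : n' ≤ n) (y : Y n), f h (v n y) = v n' (g h y))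
    (Hy : ∀ n, ContinuousMap.Homotopy ((u n).comp (v n)) (ContinuousMap.id (Y n)))
    (hHy : ∀ ⦃n n' : ℕ⦄ (h : n' ≤ n) (t : unitInterval) (y : Y n),
      g h (Hy n (t, y)) = Hy n' (t, g h y))
    (Hx : ∀ n, ContinuousMap.Homotopy ((v n).comp (u n)) (ContinuousMap.id (X n)))
    (hHx : ∀ ⦃n n' : ℕ⦄ (h : n' ≤ n) (t : unitInterval) (x : X n),
      f h (Hx n (t, x)) = Hx n' (t, f h x))
    (U : C({x : ∀ n, X n // ∀ ⦃n n' : ℕ⦄ (h : n' ≤ n), f h (x n) = x n'},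
           {y : ∀ n, Y n // ∀ ⦃n n' : ℕ⦄ (h : n' ≤ n), g h (y n) = y n'}))
    (V : C({y : ∀ n, Y n // ∀ ⦃n n' : ℕ⦄ (h : n' ≤ n), g h (y n) = y n'},
           {x : ∀ n, X n // ∀ ⦃n n' : ℕ⦄ (h : n' ≤ n), f h (x n) = x n'}))
    (hU : ∀ x n, (U x).1 n = u n (x.1 n))
    (hV : ∀ y n, (V y).1 n = v n (y.1 n)) :
    (U.comp V).Homotopic (ContinuousMap.id _) ∧
    (V.comp U).Homotopic (ContinuousMap.id _) := by
  constructor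
  · exact ⟨{
      toFun := fun p => ⟨fun n => Hy n (p.1, p.2.1 n), fun n n' h => by
        rw [hHy h, p.2.2 h]⟩
      continuous_toFun := by
        apply Continuous.subtype_mk
        apply continuous_pi
        intro n
        exact (Hy n).continuous.comp
          (continuous_fst.prodMk ((continuous_apply n).comp
            (continuous_subtype_val.comp continuous_snd)))
      map_zero_left := fun y => by
        ext n
        simp [hU, hV]
      map_one_left := fun y => by
        ext n
        simp }⟩
  · exact ⟨{
      toFun := fun p => ⟨fun n => Hx n (p.1, p.2.1 n), fun n n' h => by
        rw [hHx h, p.2.2 h]⟩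
      continuous_toFun := by
        apply Continuous.subtype_mk
        apply continuous_pi
        intro n
        exact (Hx n).continuous.comp
          (continuous_fst.prodMk ((continuous_apply n).comp
            (continuous_subtype_val.comp continuous_snd)))
      map_zero_left := fun x => by
        ext n
        simp [hU, hV]
      map_one_left := fun x => by
        ext n
        simp }⟩
end
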